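/- arXiv:1507.03798 — 3 statements merged into one kernel-verified Lean document; each statement's English description precedes it below -/
import Mathlib

section
/- Suppose F_0 and F_1 are finite-dimensional Banach lattices of functions on the same finite set I (norms on ℂ^I with the ideal property). Then for every ε > 0 there exists a continuous map Δ : F_0F_1 \ {0} → F_1 taking nonnegative values such that ‖Δf‖_{F_1} ≤ 1 and ‖f·(Δf)^{-1}‖_{F_0} ≤ (1+ε)‖f‖_{F_0F_1} for every nonzero f ∈ F_0F_1, where the quotient f·(Δf)^{-1} is computed pointwise with the conventions 0·0^{-1} = 0 and a·0^{-1} = ∞ for a ≠ 0 (so in particular Δf is nonzero at every point where f is nonzero). -/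
/-!
A nonzero `x` has a neighbourhood on which a single strictly positive denominator `h` works:
take a near-optimal factorization `x = a b`, replace `|b|` by `|b| + δ` and normalize it in `F₁`.
This is stable under perturbation of `x` because `√‖·‖_{F₀F₁}` satisfies the triangle inequality
(after balancing the factors so that `‖a‖_{F₀} = ‖b‖_{F₁}`, bound `|ab + cd|` by
`(|a| + |c|)(|b| + |d|)`), so `‖·‖_{F₀F₁}` is continuous, and it is positive at `x`.
Since `t ↦ t⁻¹` is convex, the admissible denominators of each `f` form a convex set, and a
partition of unity on `ℂ^I \ {0}` glues the local choices into a continuous selection.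
-/

noncomputable section

/-- `N` is the norm of a (finite-dimensional) Banach lattice of functions on `ι`:
a norm on `ℂ^ι` with the ideal property. -/
def IsIdealNorm {ι : Type*} (N : (ι → ℂ) → ℝ) : Prop :=
  (∀ f g, N (f + g) ≤ N f + N g) ∧
  (∀ (c : ℂ) (f : ι → ℂ), N (c • f) = ‖c‖ * N f) ∧
  (∀ f, N f = 0 → f = 0) ∧
  (∀ f g : ι → ℂ, (∀ j, ‖g j‖ ≤ ‖f j‖) → N g ≤ N f)

/-- The norm of the pointwise product `F₀F₁` of two lattices of functions on `ι`:
`‖h‖_{F₀F₁} = inf { ‖h₀‖_{F₀} ‖h₁‖_{F₁} : h = h₀ h₁ }`. -/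
def prodNormFin {ι : Type*} (N₀ N₁ : (ι → ℂ) → ℝ) (h : ι → ℂ) : ℝ :=
  sInf {c : ℝ | ∃ h₀ h₁ : ι → ℂ, h = h₀ * h₁ ∧ c = N₀ h₀ * N₁ h₁}

open Topology

namespace IsIdealNorm

variable {ι : Type*} {N : (ι → ℂ) → ℝ}

theorem add_le (hN : IsIdealNorm N) (f g : ι → ℂ) : N (f + g) ≤ N f + N g := hN.1 f g

theorem map_smul (hN : IsIdealNorm N) (c : ℂ) (f : ι → ℂ) : N (c • f) = ‖c‖ * N f :=
  hN.2.1 c f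

theorem eq_zero_of_map_eq_zero (hN : IsIdealNorm N) {f : ι → ℂ} (hf : N f = 0) : f = 0 :=
  hN.2.2.1 f hf

theorem mono (hN : IsIdealNorm N) {f g : ι → ℂ} (hfg : ∀ j, ‖f j‖ ≤ ‖g j‖) : N f ≤ N g :=
  hN.2.2.2 g f hfg

theorem map_zero (hN : IsIdealNorm N) : N 0 = 0 := by
  simpa using hN.map_smul 0 0

theorem map_neg (hN : IsIdealNorm N) (f : ι → ℂ) : N (-f) = N f := by
  simpa using hN.map_smul (-1) f

theorem map_real_smul (hN : IsIdealNorm N) (a : ℝ) (f : ι → ℂ) : N (a • f) = |a| * N f := by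
  rw [← Complex.coe_smul, hN.map_smul, Complex.norm_real, Real.norm_eq_abs]

theorem nonneg (hN : IsIdealNorm N) (f : ι → ℂ) : 0 ≤ N f := by
  have h := hN.add_le f (-f)
  rw [add_neg_cancel, hN.map_zero, hN.map_neg] at h
  linarith

theorem pos (hN : IsIdealNorm N) {f : ι → ℂ} (hf : f ≠ 0) : 0 < N f :=
  (hN.nonneg f).lt_of_ne fun h => hf (hN.eq_zero_of_map_eq_zero h.symm)

theorem map_norm (hN : IsIdealNorm N) (f : ι → ℂ) : N (fun j => (‖f j‖ : ℂ)) = N f :=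
  le_antisymm (hN.mono fun j => by simp) (hN.mono fun j => by simp)

theorem norm_apply_mul_le [DecidableEq ι] (hN : IsIdealNorm N) (f : ι → ℂ) (j : ι) :
    ‖f j‖ * N (Pi.single j 1) ≤ N f := by
  rw [← hN.map_smul]
  refine hN.mono fun i => ?_
  rcases eq_or_ne i j with rfl | hij
  · simp
  · simp [Pi.single_eq_of_ne hij]

theorem le_norm_mul [Fintype ι] (hN : IsIdealNorm N) (f : ι → ℂ) : N f ≤ ‖f‖ * N 1 := by
  rw [← abs_of_nonneg (norm_nonneg f), ← hN.map_real_smul]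
  refine hN.mono fun j => ?_
  simpa using norm_le_pi_norm f j

theorem convexOn (hN : IsIdealNorm N) : ConvexOn ℝ Set.univ N :=
  ⟨convex_univ, fun f _ g _ a b ha hb _ => by
    calc N (a • f + b • g) ≤ N (a • f) + N (b • g) := hN.add_le _ _
      _ = a • N f + b • N g := by
        rw [hN.map_real_smul, hN.map_real_smul, abs_of_nonneg ha, abs_of_nonneg hb]
        rfl⟩

theorem continuous [Fintype ι] (hN : IsIdealNorm N) : Continuous N :=
  LipschitzWith.continuous <| LipschitzWith.of_le_add_mul' (N 1) fun f g => by
    calc N f = N (f - g + g) := by rw [sub_add_cancel]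
      _ ≤ N (f - g) + N g := hN.add_le _ _
      _ ≤ N g + N 1 * dist f g := by
        rw [dist_eq_norm, mul_comm]
        linarith [hN.le_norm_mul (f - g)]

end IsIdealNorm

section ProductNorm

variable {ι : Type*} {N₀ N₁ : (ι → ℂ) → ℝ}

theorem le_prodNormFin {f : ι → ℂ} {m : ℝ} (hm : ∀ a b, f = a * b → m ≤ N₀ a * N₁ b) :
    m ≤ prodNormFin N₀ N₁ f :=
  le_csInf ⟨N₀ f * N₁ 1, f, 1, (mul_one f).symm, rfl⟩ fun _ ⟨a, b, hab, hc⟩ => hc ▸ hm a b hab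

theorem exists_mul_lt_of_prodNormFin_lt {f : ι → ℂ} {t : ℝ} (ht : prodNormFin N₀ N₁ f < t) :
    ∃ a b, f = a * b ∧ N₀ a * N₁ b < t := by
  by_contra! h
  exact (le_prodNormFin h).not_gt ht

variable (h₀ : IsIdealNorm N₀) (h₁ : IsIdealNorm N₁)
include h₀ h₁

theorem prodNormFin_le_mul (a b : ι → ℂ) : prodNormFin N₀ N₁ (a * b) ≤ N₀ a * N₁ b :=
  csInf_le ⟨0, fun _ ⟨a, b, _, hc⟩ => hc ▸ mul_nonneg (h₀.nonneg a) (h₁.nonneg b)⟩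
    ⟨a, b, rfl, rfl⟩

theorem prodNormFin_nonneg (f : ι → ℂ) : 0 ≤ prodNormFin N₀ N₁ f :=
  le_prodNormFin fun a b _ => mul_nonneg (h₀.nonneg a) (h₁.nonneg b)

theorem prodNormFin_pos {f : ι → ℂ} (hf : f ≠ 0) : 0 < prodNormFin N₀ N₁ f := by
  classical
  obtain ⟨j, hj⟩ := Function.ne_iff.mp hf
  set e : ι → ℂ := Pi.single j 1
  have he : e ≠ 0 := fun h => by simpa [e] using congrFun h j
  have hfj : 0 < ‖f j‖ := norm_pos_iff.mpr hj
  have hpos : 0 < ‖f j‖ * (N₀ e * N₁ e) := by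
    have := h₀.pos he
    have := h₁.pos he
    positivity
  refine hpos.trans_le (le_prodNormFin fun a b hab => ?_)
  calc ‖f j‖ * (N₀ e * N₁ e) = (‖a j‖ * N₀ e) * (‖b j‖ * N₁ e) := by
        rw [hab, Pi.mul_apply, norm_mul]; ring
    _ ≤ N₀ a * N₁ b :=
        mul_le_mul (h₀.norm_apply_mul_le a j) (h₁.norm_apply_mul_le b j)
          (by have := h₁.nonneg e; positivity) (h₀.nonneg a)

theorem prodNormFin_mono {u v : ι → ℂ} (huv : ∀ j, ‖u j‖ ≤ ‖v j‖) :
    prodNormFin N₀ N₁ u ≤ prodNormFin N₀ N₁ v := by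
  refine le_prodNormFin fun a b hv => ?_
  set q : ι → ℂ := fun j => u j / b j
  have hu : u = q * b := by
    ext j
    by_cases hb : b j = 0
    · have : ‖u j‖ ≤ 0 := by simpa [hv, hb] using huv j
      simp [norm_le_zero_iff.mp this, q, hb]
    · simp [q, div_mul_cancel₀ _ hb]
  have hq : ∀ j, ‖q j‖ ≤ ‖a j‖ := fun j => by
    by_cases hb : b j = 0
    · simp [q, hb]
    · rw [norm_div, div_le_iff₀ (norm_pos_iff.mpr hb), ← norm_mul]
      simpa [hv] using huv j
  calc prodNormFin N₀ N₁ u ≤ N₀ q * N₁ b := hu ▸ prodNormFin_le_mul h₀ h₁ q b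
    _ ≤ N₀ a * N₁ b := mul_le_mul_of_nonneg_right (h₀.mono hq) (h₁.nonneg b)

theorem prodNormFin_mul_add_mul_le (a b c d : ι → ℂ) :
    prodNormFin N₀ N₁ (a * b + c * d) ≤ (N₀ a + N₀ c) * (N₁ b + N₁ d) := by
  set p : ι → ℂ := (fun j => (‖a j‖ : ℂ)) + fun j => (‖c j‖ : ℂ)
  set q : ι → ℂ := (fun j => (‖b j‖ : ℂ)) + fun j => (‖d j‖ : ℂ)
  have hpq : ∀ j, ‖(a * b + c * d) j‖ ≤ ‖(p * q) j‖ := fun j => by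
    simp only [p, q, Pi.add_apply, Pi.mul_apply, ← Complex.ofReal_add, norm_mul,
      Complex.norm_of_nonneg (add_nonneg (norm_nonneg _) (norm_nonneg _))]
    calc ‖a j * b j + c j * d j‖ ≤ ‖a j‖ * ‖b j‖ + ‖c j‖ * ‖d j‖ := by
          simpa only [norm_mul] using norm_add_le (a j * b j) (c j * d j)
      _ ≤ (‖a j‖ + ‖c j‖) * (‖b j‖ + ‖d j‖) := by
          nlinarith [mul_nonneg (norm_nonneg (a j)) (norm_nonneg (d j)),
            mul_nonneg (norm_nonneg (c j)) (norm_nonneg (b j))]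
  have hp : N₀ p ≤ N₀ a + N₀ c := by
    simpa only [p, h₀.map_norm] using h₀.add_le (fun j => (‖a j‖ : ℂ)) fun j => (‖c j‖ : ℂ)
  have hq : N₁ q ≤ N₁ b + N₁ d := by
    simpa only [q, h₁.map_norm] using h₁.add_le (fun j => (‖b j‖ : ℂ)) fun j => (‖d j‖ : ℂ)
  calc prodNormFin N₀ N₁ (a * b + c * d) ≤ prodNormFin N₀ N₁ (p * q) :=
        prodNormFin_mono h₀ h₁ hpq
    _ ≤ N₀ p * N₁ q := prodNormFin_le_mul h₀ h₁ p q
    _ ≤ (N₀ a + N₀ c) * (N₁ b + N₁ d) :=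
        mul_le_mul hp hq (h₁.nonneg q) (add_nonneg (h₀.nonneg a) (h₀.nonneg c))

theorem exists_balanced_mul_lt {f : ι → ℂ} {s : ℝ} (hs : √(prodNormFin N₀ N₁ f) < s) :
    ∃ a b, f = a * b ∧ N₀ a = N₁ b ∧ N₀ a < s := by
  have hs₀ : 0 < s := (Real.sqrt_nonneg _).trans_lt hs
  rcases eq_or_ne f 0 with rfl | hf
  · exact ⟨0, 0, (mul_zero 0).symm, by rw [h₀.map_zero, h₁.map_zero], by rwa [h₀.map_zero]⟩
  obtain ⟨a, b, rfl, hab⟩ := exists_mul_lt_of_prodNormFin_lt ((Real.sqrt_lt' hs₀).1 hs)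
  have ha : 0 < N₀ a := h₀.pos (left_ne_zero_of_mul hf)
  have hb : 0 < N₁ b := h₁.pos (right_ne_zero_of_mul hf)
  set α := √(N₁ b) / √(N₀ a)
  have hα : 0 < α := by positivity
  have hαa : α * N₀ a = √(N₀ a * N₁ b) := by
    rw [Real.sqrt_mul ha.le, div_mul_eq_mul_div, mul_comm (√(N₀ a)),
      mul_div_assoc, Real.div_sqrt]
  refine ⟨(α : ℂ) • a, (α⁻¹ : ℂ) • b, ?_, ?_, ?_⟩
  · rw [smul_mul_smul_comm, ← Complex.ofReal_inv, ← Complex.ofReal_mul, mul_inv_cancel₀ hα.ne',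
      Complex.ofReal_one, one_smul]
  · rw [h₀.map_smul, h₁.map_smul, ← Complex.ofReal_inv, Complex.norm_of_nonneg hα.le,
      Complex.norm_of_nonneg (inv_nonneg.2 hα.le), hαa, eq_inv_mul_iff_mul_eq₀ hα.ne',
      Real.sqrt_mul ha.le, ← mul_assoc, div_mul_cancel₀ _ (Real.sqrt_pos.2 ha).ne', Real.mul_self_sqrt hb.le]
  · rw [h₀.map_smul, Complex.norm_of_nonneg hα.le, hαa]
    exact (Real.sqrt_lt' hs₀).2 hab

theorem sqrt_prodNormFin_add_le (u v : ι → ℂ) :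
    √(prodNormFin N₀ N₁ (u + v)) ≤ √(prodNormFin N₀ N₁ u) + √(prodNormFin N₀ N₁ v) := by
  refine le_of_forall_pos_lt_add fun η hη => ?_
  obtain ⟨a, b, rfl, hab, ha⟩ :=
    exists_balanced_mul_lt h₀ h₁ (lt_add_of_pos_right (√(prodNormFin N₀ N₁ u)) (half_pos hη))
  obtain ⟨c, d, rfl, hcd, hc⟩ :=
    exists_balanced_mul_lt h₀ h₁ (lt_add_of_pos_right (√(prodNormFin N₀ N₁ v)) (half_pos hη))
  calc √(prodNormFin N₀ N₁ (a * b + c * d)) ≤ √((N₀ a + N₀ c) * (N₁ b + N₁ d)) :=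
        Real.sqrt_le_sqrt (prodNormFin_mul_add_mul_le h₀ h₁ a b c d)
    _ = N₀ a + N₀ c := by
        rw [← hab, ← hcd, Real.sqrt_mul_self (add_nonneg (h₀.nonneg a) (h₀.nonneg c))]
    _ < _ := by linarith

variable [Fintype ι]

theorem prodNormFin_le_norm_mul (f : ι → ℂ) :
    prodNormFin N₀ N₁ f ≤ ‖f‖ * (N₀ 1 * N₁ 1) :=
  calc prodNormFin N₀ N₁ f = prodNormFin N₀ N₁ (f * 1) := by rw [mul_one]
    _ ≤ N₀ f * N₁ 1 := prodNormFin_le_mul h₀ h₁ f 1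
    _ ≤ ‖f‖ * N₀ 1 * N₁ 1 := mul_le_mul_of_nonneg_right (h₀.le_norm_mul f) (h₁.nonneg 1)
    _ = ‖f‖ * (N₀ 1 * N₁ 1) := mul_assoc _ _ _

theorem dist_sqrt_prodNormFin_le (f g : ι → ℂ) :
    dist √(prodNormFin N₀ N₁ f) √(prodNormFin N₀ N₁ g) ≤ √(‖f - g‖ * (N₀ 1 * N₁ 1)) := by
  have key : ∀ u v : ι → ℂ,
      √(prodNormFin N₀ N₁ u) - √(prodNormFin N₀ N₁ v) ≤ √(‖u - v‖ * (N₀ 1 * N₁ 1)) :=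
    fun u v => by
      have := sqrt_prodNormFin_add_le h₀ h₁ (u - v) v
      rw [sub_add_cancel] at this
      linarith [Real.sqrt_le_sqrt (prodNormFin_le_norm_mul h₀ h₁ (u - v))]
  rw [Real.dist_eq, abs_sub_le_iff, norm_sub_rev f g]
  exact ⟨norm_sub_rev f g ▸ key f g, key g f⟩

theorem continuous_prodNormFin : Continuous (prodNormFin N₀ N₁) := by
  have hsqrt : Continuous fun f => √(prodNormFin N₀ N₁ f) := by
    refine continuous_iff_continuousAt.2 fun x => ?_
    rw [ContinuousAt, tendsto_iff_dist_tendsto_zero]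
    refine squeeze_zero (fun _ => dist_nonneg) (fun f => dist_sqrt_prodNormFin_le h₀ h₁ f x) ?_
    have : Continuous fun f : ι → ℂ => √(‖f - x‖ * (N₀ 1 * N₁ 1)) := by fun_prop
    simpa using this.tendsto x
  exact (hsqrt.pow 2).congr fun f => Real.sq_sqrt (prodNormFin_nonneg h₀ h₁ f)

end ProductNorm

section Denominators

variable {ι : Type*} {N N₀ N₁ : (ι → ℂ) → ℝ}

def admissibleDenominators (N₀ N₁ : (ι → ℂ) → ℝ) (f : ι → ℂ) (c : ℝ) : Set (ι → ℝ) :=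
  {h | (∀ j, 0 < h j) ∧ N₁ (fun j => (h j : ℂ)) ≤ 1 ∧ N₀ (fun j => f j / (h j : ℂ)) ≤ c}

theorem convex_setOf_forall_pos : Convex ℝ {h : ι → ℝ | ∀ j, 0 < h j} :=
  fun _ hh _ hk _ _ ha hb hab j => convex_Ioi (0 : ℝ) (hh j) (hk j) ha hb hab

theorem IsIdealNorm.convexOn_ofReal (hN : IsIdealNorm N) :
    ConvexOn ℝ Set.univ fun h : ι → ℝ => N (fun j => (h j : ℂ)) :=
  ⟨convex_univ, fun h _ k _ a b ha hb hab => by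
    have hcast : (fun j => ((a • h + b • k) j : ℂ))
        = a • (fun j => (h j : ℂ)) + b • fun j => (k j : ℂ) := by
      ext j; simp
    dsimp only
    rw [hcast]
    exact hN.convexOn.2 trivial trivial ha hb hab⟩

theorem IsIdealNorm.convexOn_div (hN : IsIdealNorm N) (f : ι → ℂ) :
    ConvexOn ℝ {h : ι → ℝ | ∀ j, 0 < h j} fun h => N (fun j => f j / (h j : ℂ)) :=
  ⟨convex_setOf_forall_pos, fun h hh k hk a b ha hb hab => by
    set u : ι → ℂ := fun j => (‖f j / (h j : ℂ)‖ : ℂ)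
    set v : ι → ℂ := fun j => (‖f j / (k j : ℂ)‖ : ℂ)
    have hpt : ∀ j, ‖f j / ((a • h + b • k) j : ℂ)‖ ≤ ‖(a • u + b • v) j‖ := fun j => by
      have hinv := (convexOn_zpow (-1)).2 (hh j) (hk j) ha hb hab
      simp only [zpow_neg_one, smul_eq_mul] at hinv
      have hpos : 0 < a * h j + b * k j := convex_setOf_forall_pos hh hk ha hb hab j
      simp only [u, v, Pi.add_apply, Pi.smul_apply, norm_div, Complex.norm_real, Real.norm_eq_abs,
        smul_eq_mul, Complex.real_smul, ← Complex.ofReal_mul, ← Complex.ofReal_add,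
        abs_of_pos (hh j), abs_of_pos (hk j), abs_of_pos hpos]
      rw [abs_of_nonneg (by have := hh j; have := hk j; positivity)]
      calc ‖f j‖ / (a * h j + b * k j) ≤ ‖f j‖ * (a * (h j)⁻¹ + b * (k j)⁻¹) :=
            mul_le_mul_of_nonneg_left hinv (norm_nonneg _)
        _ = a * (‖f j‖ / h j) + b * (‖f j‖ / k j) := by ring
    calc N (fun j => f j / ((a • h + b • k) j : ℂ)) ≤ N (a • u + b • v) := hN.mono hpt
      _ ≤ a • N u + b • N v := hN.convexOn.2 trivial trivial ha hb hab
      _ = _ := by simp only [u, v, hN.map_norm]⟩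

theorem convex_admissibleDenominators (h₀ : IsIdealNorm N₀) (h₁ : IsIdealNorm N₁)
    (f : ι → ℂ) (c : ℝ) : Convex ℝ (admissibleDenominators N₀ N₁ f c) := by
  convert (convex_setOf_forall_pos.inter (h₁.convexOn_ofReal.convex_le 1)).inter
    ((h₀.convexOn_div f).convex_le c) using 1
  ext h
  exact ⟨fun ⟨hpos, hN₁, hN₀⟩ => ⟨⟨hpos, trivial, hN₁⟩, hpos, hN₀⟩,
    fun ⟨⟨hpos, _, hN₁⟩, _, hN₀⟩ => ⟨hpos, hN₁, hN₀⟩⟩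

variable (h₀ : IsIdealNorm N₀) (h₁ : IsIdealNorm N₁)
include h₀ h₁

theorem exists_pos_denominator_lt [Nonempty ι] {f : ι → ℂ} {t : ℝ}
    (ht : prodNormFin N₀ N₁ f < t) :
    ∃ h : ι → ℝ, (∀ j, 0 < h j) ∧ N₁ (fun j => (h j : ℂ)) ≤ 1 ∧
      N₀ (fun j => f j / (h j : ℂ)) < t := by
  obtain ⟨a, b, rfl, hab⟩ := exists_mul_lt_of_prodNormFin_lt ht
  have hA := h₀.nonneg a
  have hE := h₁.nonneg 1
  -- `δ` is chosen so that `(N₁ b + δ * N₁ 1) * N₀ a < t`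
  set δ := (t - N₀ a * N₁ b) / (N₀ a * N₁ 1 + 1)
  have hδ : 0 < δ := div_pos (sub_pos.2 hab) (by positivity)
  set k : ι → ℝ := fun j => ‖b j‖ + δ
  have hk : ∀ j, 0 < k j := fun j => by positivity
  set K := N₁ (fun j => (k j : ℂ))
  have hK : 0 < K := h₁.pos fun hz =>
    (hk (Classical.arbitrary ι)).ne' (by simpa using congrFun hz (Classical.arbitrary ι))
  have hKle : K ≤ N₁ b + δ * N₁ 1 := by
    have hsplit : (fun j => (k j : ℂ)) = (fun j => (‖b j‖ : ℂ)) + δ • 1 := by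
      ext j; simp [k]
    calc K = N₁ ((fun j => (‖b j‖ : ℂ)) + δ • 1) := by rw [← hsplit]
      _ ≤ N₁ (fun j => (‖b j‖ : ℂ)) + N₁ (δ • 1) := h₁.add_le _ _
      _ = N₁ b + δ * N₁ 1 := by rw [h₁.map_norm, h₁.map_real_smul, abs_of_pos hδ]
  refine ⟨fun j => k j / K, fun j => div_pos (hk j) hK, ?_, ?_⟩
  · have hscale : (fun j => ((k j / K : ℝ) : ℂ)) = K⁻¹ • fun j => (k j : ℂ) := by
      ext j; simp [div_eq_inv_mul]
    rw [hscale, h₁.map_real_smul, abs_of_pos (inv_pos.2 hK), inv_mul_cancel₀ hK.ne']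
  · have hpt : ∀ j, ‖(a * b) j / ((k j / K : ℝ) : ℂ)‖ ≤ ‖(K • a) j‖ := fun j => by
      have hkK : 0 < k j / K := div_pos (hk j) hK
      rw [Pi.mul_apply, norm_div, norm_mul, Complex.norm_of_nonneg hkK.le, Pi.smul_apply, norm_smul,
        Real.norm_of_nonneg hK.le, div_le_iff₀ hkK]
      calc ‖a j‖ * ‖b j‖ ≤ ‖a j‖ * k j :=
            mul_le_mul_of_nonneg_left (le_add_of_nonneg_right hδ.le) (norm_nonneg _)
        _ = K * ‖a j‖ * (k j / K) := by field_simp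
    calc N₀ (fun j => (a * b) j / ((k j / K : ℝ) : ℂ)) ≤ N₀ (K • a) := h₀.mono hpt
      _ = K * N₀ a := by rw [h₀.map_real_smul, abs_of_pos hK]
      _ ≤ (N₁ b + δ * N₁ 1) * N₀ a := mul_le_mul_of_nonneg_right hKle hA
      _ < N₀ a * N₁ b + δ * (N₀ a * N₁ 1 + 1) := by nlinarith
      _ = t := by rw [div_mul_cancel₀ _ (by positivity)]; ring

theorem eventually_mem_admissibleDenominators [Fintype ι] {x : ι → ℂ} (hx : x ≠ 0) {ε : ℝ}
    (hε : 0 < ε) :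
    ∃ h, ∀ᶠ f in 𝓝 x, h ∈ admissibleDenominators N₀ N₁ f ((1 + ε) * prodNormFin N₀ N₁ f) := by
  obtain ⟨j, -⟩ := Function.ne_iff.mp hx
  have : Nonempty ι := ⟨j⟩
  have hP := prodNormFin_pos h₀ h₁ hx
  obtain ⟨h, hpos, hN₁, hN₀⟩ :=
    exists_pos_denominator_lt h₀ h₁ (lt_mul_of_one_lt_left hP (lt_add_of_pos_right 1 hε))
  have hcont : Continuous fun f : ι → ℂ => N₀ (fun j => f j / (h j : ℂ)) :=
    h₀.continuous.comp (continuous_pi fun j => (continuous_apply j).div_const _)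
  have hopen : IsOpen {f | N₀ (fun j => f j / (h j : ℂ)) < (1 + ε) * prodNormFin N₀ N₁ f} :=
    isOpen_lt hcont (continuous_const.mul (continuous_prodNormFin h₀ h₁))
  exact ⟨h, (hopen.eventually_mem hN₀).mono fun f hf => ⟨hpos, hN₁, hf.le⟩⟩

end Denominators

/-- For finite-dimensional Banach lattices `F₀`, `F₁` on the same finite set and every
`ε > 0` there is a continuous map `Δ : F₀F₁ \ {0} → F₁` with nonnegative values such
that `‖Δ f‖_{F₁} ≤ 1` and `‖f (Δ f)⁻¹‖_{F₀} ≤ (1 + ε) ‖f‖_{F₀F₁}` (the quotient is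
taken pointwise; in particular `Δ f` is nonzero wherever `f` is nonzero). -/
theorem continuous_factorization_selection {ι : Type*} [Fintype ι]
    (N₀ N₁ : (ι → ℂ) → ℝ) (h₀ : IsIdealNorm N₀) (h₁ : IsIdealNorm N₁)
    (ε : ℝ) (hε : 0 < ε) :
    ∃ Δ : (ι → ℂ) → (ι → ℝ),
      ContinuousOn Δ {f : ι → ℂ | f ≠ 0} ∧
      ∀ f : ι → ℂ, f ≠ 0 →
        (∀ j, 0 ≤ Δ f j) ∧
        N₁ (fun j => (Δ f j : ℂ)) ≤ 1 ∧
        (∀ j, f j ≠ 0 → Δ f j ≠ 0) ∧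
        N₀ (fun j => f j / (Δ f j : ℂ)) ≤ (1 + ε) * prodNormFin N₀ N₁ f := by
  obtain ⟨g, hg⟩ := exists_continuous_forall_mem_convex_of_local_const
    (t := fun f : {f : ι → ℂ | f ≠ 0} =>
      admissibleDenominators N₀ N₁ f ((1 + ε) * prodNormFin N₀ N₁ f))
    (fun f => convex_admissibleDenominators h₀ h₁ _ _) fun f => by
      obtain ⟨h, hh⟩ := eventually_mem_admissibleDenominators h₀ h₁ f.2 hε
      exact ⟨h, continuous_subtype_val.continuousAt.preimage_mem_nhds hh⟩
  refine ⟨fun f => if hf : f ≠ 0 then g ⟨f, hf⟩ else 0, ?_, fun f hf => ?_⟩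
  · rw [continuousOn_iff_continuous_domRestrict]
    convert g.continuous using 1
    funext f
    exact dif_pos f.2
  · obtain ⟨hpos, hN₁, hN₀⟩ := hg ⟨f, hf⟩
    simp only [dif_pos hf]
    exact ⟨fun j => (hpos j).le, hN₁, fun j _ => (hpos j).ne', hN₀⟩

end
end

section
/- Let X and Y be Banach lattices of measurable functions on the same σ-finite measure space, both having the Fatou property. Then the infimum in the definition of the product norm is attained: for every function f ∈ XY there exist g ∈ X and h ∈ Y such that f = gh and ‖g‖_X · ‖h‖_Y ≤ ‖f‖_{XY}. -/
open scoped ENNReal NNReal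
open Filter MeasureTheory

noncomputable section

variable {α : Type*}

/-- A quasi-normed lattice (ideal space) of measurable functions on a measure space,
described by its extended-real-valued quasi-norm `N`; the space itself is
`{f : N f < ∞}`, and it consists of (a.e. classes of) measurable functions. -/
structure MeasLattice [MeasurableSpace α] (μ : Measure α) where
  N : (α → ℝ) → ℝ≥0∞
  ideal : ∀ f g : α → ℝ, (∀ᵐ x ∂μ, |g x| ≤ |f x|) → N g ≤ N f
  n_smul : ∀ (c : ℝ) (f : α → ℝ), N (c • f) = (‖c‖₊ : ℝ≥0∞) * N f
  n_eq_zero : ∀ f : α → ℝ, N f = 0 → f =ᵐ[μ] 0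
  meas : ∀ f : α → ℝ, N f ≠ ⊤ → AEMeasurable f μ
  quasi : ∃ K : ℝ≥0, ∀ f g : α → ℝ, N (f + g) ≤ (K : ℝ≥0∞) * (N f + N g)

/-- The lattice is a Banach lattice: its quasi-norm satisfies the triangle
inequality and the space is complete. -/
def MeasLattice.IsBanach [MeasurableSpace α] {μ : Measure α} (X : MeasLattice μ) : Prop :=
  (∀ f g : α → ℝ, X.N (f + g) ≤ X.N f + X.N g) ∧
  ∀ f : ℕ → α → ℝ, (∀ n, X.N (f n) ≠ ⊤) →
    (∀ ε : ℝ≥0∞, 0 < ε → ∃ M : ℕ, ∀ m ≥ M, ∀ n ≥ M, X.N (f m - f n) < ε) →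
    ∃ g : α → ℝ, X.N g ≠ ⊤ ∧ Filter.Tendsto (fun n => X.N (f n - g)) Filter.atTop (nhds 0)

/-- The Fatou property of the lattice `X`: if `‖f_n‖_X ≤ 1` and `f_n → g` almost
everywhere, then `g ∈ X` and `‖g‖_X ≤ 1`. -/
def MeasLattice.Fatou [MeasurableSpace α] {μ : Measure α} (X : MeasLattice μ) : Prop :=
  ∀ (f : ℕ → α → ℝ) (g : α → ℝ), (∀ n, X.N (f n) ≤ 1) →
    (∀ᵐ x ∂μ, Filter.Tendsto (fun n => f n x) Filter.atTop (nhds (g x))) →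
    X.N g ≤ 1

/-- Order continuity of the quasi-norm `N`: if the pointwise supremum `sup_n |f_n|`
belongs to the lattice and `f_n → 0` almost everywhere, then `‖f_n‖ → 0`. -/
def mOrderCont [MeasurableSpace α] (μ : Measure α) (N : (α → ℝ) → ℝ≥0∞) : Prop :=
  ∀ f : ℕ → α → ℝ,
    N (fun x => ⨆ n, |f n x|) ≠ ⊤ →
    (∀ᵐ x ∂μ, Filter.Tendsto (fun n => f n x) Filter.atTop (nhds 0)) →
    Filter.Tendsto (fun n => N (f n)) Filter.atTop (nhds 0)

/-- The quasi-norm of the pointwise product `XY` of two ideal spaces: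
`‖h‖_{XY} = inf { ‖h₀‖_X ‖h₁‖_Y : h = h₀ h₁ a.e. }`. -/
def mProd [MeasurableSpace α] (μ : Measure α) (N₀ N₁ : (α → ℝ) → ℝ≥0∞)
    (h : α → ℝ) : ℝ≥0∞ :=
  ⨅ (p : (α → ℝ) × (α → ℝ)) (_ : h =ᵐ[μ] p.1 * p.2), N₀ p.1 * N₁ p.2

/-- The norm of the order dual (associate space) of the ideal space with norm `N`:
`‖g‖_{X'} = sup { ∫ |f g| : ‖f‖_X ≤ 1 }`. -/
def mDual [MeasurableSpace α] (μ : Measure α) (N : (α → ℝ) → ℝ≥0∞)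
    (g : α → ℝ) : ℝ≥0∞ :=
  ⨆ (f : α → ℝ) (_ : N f ≤ 1), ∫⁻ x, ENNReal.ofReal |f x * g x| ∂μ

/-! Take factorizations `|f| = uₙ vₙ` with `‖uₙ‖_X ≤ 1` and `‖vₙ‖_Y → ‖f‖_{XY}`. By AM-GM the
constraint `|f| ≤ w z` survives convex combinations, so every `w` in the convex hull of
`{uᵢ : i ≥ n}` has a partner `z` with `‖z‖_Y ≤ sup_{i ≥ n} ‖vᵢ‖_Y`. Choosing such `wₙ` to nearly
minimize `∫ exp (-w)` (with respect to a finite measure equivalent to `μ`) makes `exp (-wₙ / 2)`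
Cauchy in `L²`, since `exp (-w / 2)` turns midpoints into geometric means; along a subsequence `wₙ`
converges a.e. in `[0, ∞]` (Delbaen–Schachermayer's form of Komlós' lemma). The Fatou property of
`X` excludes the value `∞` and gives `‖g‖_X ≤ 1` for the limit `g`; the Fatou property of `Y`,
applied to `|f| / wₙ ≤ zₙ`, shows that `f` vanishes where `g` does and that `‖f / g‖_Y ≤ ‖f‖_{XY}`.
-/

open Topology

theorem le_add_mul_add_of_le_mul {F w₁ w₂ z₁ z₂ a b : ℝ} (hw₁ : 0 ≤ w₁) (hw₂ : 0 ≤ w₂)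
    (hz₁ : 0 ≤ z₁) (hz₂ : 0 ≤ z₂) (ha : 0 ≤ a) (hb : 0 ≤ b) (hab : a + b = 1)
    (h₁ : F ≤ w₁ * z₁) (h₂ : F ≤ w₂ * z₂) :
    F ≤ (a * w₁ + b * w₂) * (a * z₁ + b * z₂) := by
  rcases le_or_gt F 0 with hF | hF
  · exact hF.trans (by positivity)
  -- AM-GM: `F ^ 2 ≤ (w₁ * z₂) * (w₂ * z₁)`
  have hcross : 2 * F ≤ w₁ * z₂ + w₂ * z₁ := by
    refine (pow_le_pow_iff_left₀ (by positivity) (by positivity) two_ne_zero).1 ?_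
    nlinarith [sq_nonneg (w₁ * z₂ - w₂ * z₁), mul_le_mul h₁ h₂ hF.le (by positivity)]
  have hb' : b = 1 - a := by linarith
  subst hb'
  nlinarith [mul_le_mul_of_nonneg_left h₁ (mul_nonneg ha ha),
    mul_le_mul_of_nonneg_left h₂ (mul_nonneg hb hb),
    mul_le_mul_of_nonneg_left hcross (mul_nonneg ha hb)]

namespace MeasLattice

variable [MeasurableSpace α] {μ : Measure α} (X : MeasLattice μ)

theorem n_zero : X.N 0 = 0 := by
  simpa using X.n_smul 0 0

theorem n_abs (f : α → ℝ) : X.N |f| = X.N f :=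
  le_antisymm (X.ideal f _ (.of_forall fun x => by simp))
    (X.ideal _ f (.of_forall fun x => by simp))

theorem n_smul_of_nonneg {c : ℝ} (hc : 0 ≤ c) (f : α → ℝ) :
    X.N (c • f) = ENNReal.ofReal c * X.N f := by
  rw [X.n_smul, ← Real.enorm_eq_ofReal hc, enorm_eq_nnnorm]

theorem convex_setOf_n_le (hX : ∀ f g : α → ℝ, X.N (f + g) ≤ X.N f + X.N g) (c : ℝ≥0∞) :
    Convex ℝ {f | X.N f ≤ c} := by
  intro f hf g hg a b ha hb hab
  calc X.N (a • f + b • g) ≤ ENNReal.ofReal a * X.N f + ENNReal.ofReal b * X.N g := by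
        simpa only [X.n_smul_of_nonneg ha, X.n_smul_of_nonneg hb] using hX (a • f) (b • g)
    _ ≤ ENNReal.ofReal a * c + ENNReal.ofReal b * c := by gcongr <;> assumption
    _ = c := by rw [← add_mul, ← ENNReal.ofReal_add ha hb, hab, ENNReal.ofReal_one, one_mul]

theorem convex_setOf_le_mul (hX : ∀ f g : α → ℝ, X.N (f + g) ≤ X.N f + X.N g) (F : α → ℝ)
    (c : ℝ≥0∞) :
    Convex ℝ {w : α → ℝ | 0 ≤ w ∧ ∃ z, 0 ≤ z ∧ X.N z ≤ c ∧ ∀ᵐ x ∂μ, F x ≤ w x * z x} := by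
  rintro w₁ ⟨hw₁, z₁, hz₁, hz₁c, h₁⟩ w₂ ⟨hw₂, z₂, hz₂, hz₂c, h₂⟩ a b ha hb hab
  refine ⟨by positivity, a • z₁ + b • z₂, by positivity,
    X.convex_setOf_n_le hX c hz₁c hz₂c ha hb hab, ?_⟩
  filter_upwards [h₁, h₂] with x hx₁ hx₂
  exact le_add_mul_add_of_le_mul (hw₁ x) (hw₂ x) (hz₁ x) (hz₂ x) ha hb hab hx₁ hx₂

variable {X}

theorem Fatou.n_le_of_forall_le (hXF : X.Fatou) {f : ℕ → α → ℝ} {g : α → ℝ} {C : ℝ≥0∞}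
    (hC₀ : C ≠ 0) (hC : C ≠ ⊤) (hf : ∀ n, X.N (f n) ≤ C)
    (hfg : ∀ᵐ x ∂μ, Tendsto (fun n => f n x) atTop (𝓝 (g x))) : X.N g ≤ C := by
  have ht : 0 ≤ C.toReal⁻¹ := by positivity
  have hCinv : ENNReal.ofReal C.toReal⁻¹ = C⁻¹ := by
    rw [ENNReal.ofReal_inv_of_pos (ENNReal.toReal_pos hC₀ hC), ENNReal.ofReal_toReal hC]
  have hscaled := hXF (fun n => C.toReal⁻¹ • f n) (C.toReal⁻¹ • g)
    (fun n => by
      rw [X.n_smul_of_nonneg ht, hCinv, ENNReal.inv_mul_le_iff hC₀ hC, mul_one]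
      exact hf n)
    (hfg.mono fun x hx => by simpa using hx.const_smul C.toReal⁻¹)
  rw [X.n_smul_of_nonneg ht, hCinv] at hscaled
  rwa [ENNReal.inv_mul_le_iff hC₀ hC, mul_one] at hscaled

theorem Fatou.n_le_liminf (hXF : X.Fatou) {f : ℕ → α → ℝ} {g : α → ℝ}
    (hfg : ∀ᵐ x ∂μ, Tendsto (fun n => f n x) atTop (𝓝 (g x))) :
    X.N g ≤ liminf (fun n => X.N (f n)) atTop := by
  refine le_of_forall_gt_imp_ge_of_dense fun C hC => ?_
  rcases eq_or_ne C ⊤ with rfl | hCtop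
  · exact le_top
  obtain ⟨φ, hφ, hφC⟩ :=
    extraction_of_frequently_atTop (frequently_lt_of_liminf_lt (by isBoundedDefault) hC)
  exact hXF.n_le_of_forall_le (pos_of_gt hC).ne' hCtop (fun n => (hφC n).le)
    (hfg.mono fun x hx => hx.comp hφ.tendsto_atTop)

theorem Fatou.ae_not_tendsto_atTop (hXF : X.Fatou) {θ : ℕ → α → ℝ}
    (hθ : liminf (fun n => X.N (θ n)) atTop ≠ ⊤) :
    ∀ᵐ x ∂μ, ¬Tendsto (fun n => θ n x) atTop atTop := by
  set P := {x | Tendsto (fun n => θ n x) atTop atTop}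
  have hk : ∀ k : ℕ, (k : ℝ≥0∞) * X.N (P.indicator 1) ≤
      liminf (fun n => X.N (θ n)) atTop := by
    intro k
    have hconv : ∀ᵐ x ∂μ, Tendsto (fun n => P.indicator (fun y => min |θ n y| k) x) atTop
        (𝓝 (((k : ℝ) • P.indicator 1) x)) := by
      refine .of_forall fun x => ?_
      by_cases hx : x ∈ P
      · simp only [Set.indicator_of_mem hx, Pi.smul_apply, Pi.one_apply, smul_eq_mul, mul_one]
        refine tendsto_const_nhds.congr' ?_
        filter_upwards [(tendsto_abs_atTop_atTop.comp hx).eventually_ge_atTop (k : ℝ)] with n hn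
        exact (min_eq_right hn).symm
      · simp [Set.indicator_of_notMem hx]
    have := hXF.n_le_liminf hconv
    rw [X.n_smul_of_nonneg k.cast_nonneg, ENNReal.ofReal_natCast] at this
    refine this.trans (liminf_le_liminf (.of_forall fun n => X.ideal _ _ (.of_forall fun x => ?_)))
    by_cases hx : x ∈ P
    · simp only [Set.indicator_of_mem hx]
      rw [abs_of_nonneg (by positivity)]
      exact min_le_left _ _
    · simp [Set.indicator_of_notMem hx]
  have hP : X.N (P.indicator 1) = 0 := by
    by_contra h
    obtain ⟨k, hk'⟩ := ENNReal.exists_nat_gt (ENNReal.div_lt_top hθ h).ne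
    rw [ENNReal.div_lt_iff (.inl h) (.inr hθ)] at hk'
    exact (hk k).not_gt hk'
  filter_upwards [X.n_eq_zero _ hP] with x hx hxP
  exact (by simpa using hx : x ∉ P) hxP

end MeasLattice

theorem exists_minimizing_seq_cauchy {β : Type*} {C : ℕ → Set β} (hC : Antitone C)
    (hne : ∀ n, (C n).Nonempty) {F : β → ℝ} (hbelow : BddBelow (F '' C 0))
    (habove : BddAbove (F '' C 0)) {mid : β → β → β}
    (hmid : ∀ n, ∀ x ∈ C n, ∀ y ∈ C n, mid x y ∈ C n) {d : β → β → ℝ}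
    (hd : ∀ x ∈ C 0, ∀ y ∈ C 0, d x y ≤ F x + F y - 2 * F (mid x y)) :
    ∃ x : ℕ → β, (∀ n, x n ∈ C n) ∧ ∀ ε > 0, ∃ N, ∀ m ≥ N, ∀ n ≥ N, d (x m) (x n) < ε := by
  set a : ℕ → ℝ := fun n => sInf (F '' C n)
  have hsub : ∀ n, C n ⊆ C 0 := fun n => hC (Nat.zero_le n)
  have ha_le : ∀ n, ∀ x ∈ C n, a n ≤ F x := fun n x hx =>
    csInf_le (hbelow.mono (Set.image_mono (hsub n))) ⟨x, hx, rfl⟩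
  have ha_mono : Monotone a := fun m n hmn =>
    csInf_le_csInf (hbelow.mono (Set.image_mono (hsub m))) ((hne n).image F)
      (Set.image_mono (hC hmn))
  obtain ⟨B, hB⟩ := habove
  have ha_bdd : BddAbove (Set.range a) := ⟨B, by
    rintro _ ⟨n, rfl⟩
    obtain ⟨x, hx⟩ := hne n
    exact (ha_le n x hx).trans (hB ⟨x, hsub n hx, rfl⟩)⟩
  have hx : ∀ n, ∃ x ∈ C n, F x < a n + 1 / (n + 1) := fun n => by
    obtain ⟨_, ⟨x, hx, rfl⟩, hlt⟩ := exists_lt_of_csInf_lt ((hne n).image F)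
      (lt_add_of_pos_right (a n) (by positivity : (0 : ℝ) < 1 / (n + 1)))
    exact ⟨x, hx, hlt⟩
  choose x hxC hxF using hx
  refine ⟨x, hxC, fun ε hε => ?_⟩
  set A := ⨆ n, a n
  -- for `m, n ≥ N` the midpoint lies in `C N`, so `F (mid ..) ≥ a N`
  have hbound : ∀ N, ∀ m ≥ N, ∀ n ≥ N, d (x m) (x n) ≤ 2 * (A - a N) + 2 * (1 / (N + 1)) := by
    intro N m hm n hn
    have hmidN := ha_le N _ (hmid N _ (hC hm (hxC m)) _ (hC hn (hxC n)))
    have hδ : ∀ k ≥ N, (1 : ℝ) / (k + 1) ≤ 1 / (N + 1) := fun k hk => by gcongr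
    have := hd _ (hsub m (hxC m)) _ (hsub n (hxC n))
    have := le_ciSup ha_bdd m
    have := le_ciSup ha_bdd n
    linarith [hxF m, hxF n, hδ m hm, hδ n hn]
  have hlim : Tendsto (fun N : ℕ => 2 * (A - a N) + 2 * (1 / ((N : ℝ) + 1))) atTop (𝓝 0) := by
    have := ((tendsto_atTop_ciSup ha_mono ha_bdd).const_sub A).const_mul 2 |>.add
      (tendsto_one_div_add_atTop_nhds_zero_nat.const_mul 2)
    simpa [A] using this
  obtain ⟨N, hN⟩ := eventually_atTop.1 (hlim.eventually (gt_mem_nhds hε))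
  exact ⟨N, fun m hm n hn => (hbound N m hm n hn).trans_lt (hN N le_rfl)⟩

theorem Real.tendsto_atBot_or_exists_tendsto_of_tendsto_exp {ι : Type*} {L : Filter ι}
    {b : ι → ℝ} {l : ℝ} (h : Tendsto (fun i => Real.exp (b i)) L (𝓝 l)) :
    Tendsto b L atBot ∨ ∃ l', Tendsto b L (𝓝 l') := by
  rcases eq_or_ne l 0 with rfl | hl
  · exact .inl (Real.tendsto_exp_comp_nhds_zero.1 h)
  · exact .inr ⟨Real.log l, by
    simpa [Function.comp_def] using (Real.continuousAt_log hl).tendsto.comp h⟩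

section

variable [MeasurableSpace α]

theorem MeasureTheory.MemLp.norm_toLp_sq {ν : Measure α} {f : α → ℝ} (hf : MemLp f 2 ν) :
    ‖hf.toLp f‖ ^ 2 = ∫ x, f x ^ 2 ∂ν := by
  rw [← real_inner_self_eq_norm_sq, L2.inner_def]
  refine integral_congr_ae (hf.coeFn_toLp.mono fun x hx => ?_)
  simp [hx, sq]

theorem exists_strictMono_ae_tendsto_of_cauchy_L2 {ν : Measure α} {f : ℕ → α → ℝ}
    (hf : ∀ n, MemLp (f n) 2 ν)
    (hcau : ∀ ε > 0, ∃ N, ∀ m ≥ N, ∀ n ≥ N, ∫ x, (f m x - f n x) ^ 2 ∂ν < ε) :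
    ∃ φ : ℕ → ℕ, StrictMono φ ∧ ∀ᵐ x ∂ν, ∃ l, Tendsto (fun k => f (φ k) x) atTop (𝓝 l) := by
  set F : ℕ → Lp ℝ 2 ν := fun n => (hf n).toLp (f n)
  have hF : CauchySeq F := by
    refine Metric.cauchySeq_iff.2 fun ε hε => ?_
    obtain ⟨N, hN⟩ := hcau (ε ^ 2) (by positivity)
    refine ⟨N, fun m hm n hn => ?_⟩
    rw [dist_eq_norm, ← pow_lt_pow_iff_left₀ (norm_nonneg _) hε.le two_ne_zero, ← MemLp.toLp_sub,
      MemLp.norm_toLp_sq]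
    exact hN m hm n hn
  obtain ⟨g, hg⟩ := cauchySeq_tendsto_of_complete hF
  obtain ⟨φ, hφ, hae⟩ := (tendstoInMeasure_of_tendsto_Lp hg).exists_seq_tendsto_ae
  refine ⟨φ, hφ, ?_⟩
  filter_upwards [hae, ae_all_iff.2 fun n => (hf n).coeFn_toLp] with x hx hcoe
  exact ⟨g x, by simpa [F, hcoe] using hx⟩

variable {ν : Measure α} [IsFiniteMeasure ν]

open Real

theorem integrable_exp_neg {w : α → ℝ} (hw₀ : 0 ≤ w) (hw : AEMeasurable w ν) :
    Integrable (fun x => exp (-w x)) ν :=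
  .of_bound hw.neg.exp.aestronglyMeasurable 1 (.of_forall fun x => by
    simpa [abs_of_pos (exp_pos _)] using hw₀ x)

theorem integral_sq_exp_neg_half_sub {w₁ w₂ : α → ℝ} (hw₁₀ : 0 ≤ w₁) (hw₂₀ : 0 ≤ w₂)
    (hw₁ : AEMeasurable w₁ ν) (hw₂ : AEMeasurable w₂ ν) :
    ∫ x, (exp (-w₁ x / 2) - exp (-w₂ x / 2)) ^ 2 ∂ν =
      ∫ x, exp (-w₁ x) ∂ν + ∫ x, exp (-w₂ x) ∂ν
        - 2 * ∫ x, exp (-((2⁻¹ : ℝ) • w₁ + (2⁻¹ : ℝ) • w₂) x) ∂ν := by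
  have hpt : ∀ a b : ℝ, (exp (-a / 2) - exp (-b / 2)) ^ 2
      = exp (-a) + exp (-b) - 2 * exp (-(2⁻¹ * a + 2⁻¹ * b)) := fun a b => by
    rw [sub_sq, sq, sq, ← exp_add, ← exp_add, mul_assoc, ← exp_add]
    ring_nf
  have hmid : Integrable (fun x => exp (-((2⁻¹ : ℝ) • w₁ + (2⁻¹ : ℝ) • w₂) x)) ν :=
    integrable_exp_neg (by positivity) ((hw₁.const_smul _).add (hw₂.const_smul _))
  simp only [hpt, Pi.add_apply, Pi.smul_apply, smul_eq_mul] at hmid ⊢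
  have h₁ := integrable_exp_neg hw₁₀ hw₁
  have h₂ := integrable_exp_neg hw₂₀ hw₂
  rw [integral_sub (f := fun x => exp (-w₁ x) + exp (-w₂ x)) (h₁.add h₂) (hmid.const_mul 2),
    integral_add h₁ h₂, integral_const_mul]

theorem exists_ae_tendsto_of_mem_convexHull_tail_of_isFiniteMeasure {u : ℕ → α → ℝ}
    (hu₀ : ∀ n, 0 ≤ u n) (hu : ∀ n, AEMeasurable (u n) ν) :
    ∃ w : ℕ → α → ℝ, (∀ n, w n ∈ convexHull ℝ (u '' Set.Ici n)) ∧ ∀ᵐ x ∂ν,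
      Tendsto (fun n => w n x) atTop atTop ∨ ∃ l, Tendsto (fun n => w n x) atTop (𝓝 l) := by
  set C : ℕ → Set (α → ℝ) := fun n => convexHull ℝ (u '' Set.Ici n)
  have hC : Antitone C := fun m n h => convexHull_mono (Set.image_mono (Set.Ici_subset_Ici.2 h))
  have hC₀ : C 0 ⊆ Set.Ici 0 ∩ {w | AEMeasurable w ν} := by
    refine convexHull_min ?_ ((convex_Ici 0).inter fun w₁ h₁ w₂ h₂ a b _ _ _ =>
      (h₁.const_smul a).add (h₂.const_smul b))
    rintro _ ⟨i, -, rfl⟩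
    exact ⟨hu₀ i, hu i⟩
  -- `exp (-w₁ / 2) * exp (-w₂ / 2) = exp (-(w₁ + w₂) / 2)`, so the L² distance of the
  -- `exp (-w / 2)` is the midpoint-convexity defect of `w ↦ ∫ exp (-w)`
  obtain ⟨w, hwC, hcau⟩ := exists_minimizing_seq_cauchy hC
    (fun n => ⟨u n, subset_convexHull ℝ _ ⟨n, Set.self_mem_Ici, rfl⟩⟩)
    (F := fun w => ∫ x, exp (-w x) ∂ν) ⟨0, by
      rintro _ ⟨w, -, rfl⟩
      exact integral_nonneg fun x => (exp_pos _).le⟩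
    ⟨ν.real Set.univ, by
      rintro _ ⟨w, hw, rfl⟩
      refine (le_abs_self _).trans ?_
      simpa using norm_integral_le_of_norm_le_const (f := fun x => exp (-w x)) (C := 1)
        (.of_forall fun x => by simpa [abs_of_pos (exp_pos _)] using (hC₀ hw).1 x)⟩
    (mid := fun w₁ w₂ => (2⁻¹ : ℝ) • w₁ + (2⁻¹ : ℝ) • w₂)
    (fun n w₁ h₁ w₂ h₂ => convex_convexHull ℝ _ h₁ h₂ (by norm_num) (by norm_num) (by norm_num))
    (d := fun w₁ w₂ => ∫ x, (exp (-w₁ x / 2) - exp (-w₂ x / 2)) ^ 2 ∂ν)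
    (fun w₁ h₁ w₂ h₂ => (integral_sq_exp_neg_half_sub (hC₀ h₁).1 (hC₀ h₂).1 (hC₀ h₁).2
      (hC₀ h₂).2).le)
  have hwC₀ : ∀ n, w n ∈ C 0 := fun n => hC (Nat.zero_le n) (hwC n)
  have hp : ∀ n, MemLp (fun x => exp (-w n x / 2)) 2 ν := fun n =>
    .of_bound ((hC₀ (hwC₀ n)).2.neg.div_const 2).exp.aestronglyMeasurable 1 <|
      .of_forall fun x => by
        have : 0 ≤ w n x := (hC₀ (hwC₀ n)).1 x
        simp only [Real.norm_eq_abs, abs_of_pos (exp_pos _), exp_le_one_iff]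
        linarith
  obtain ⟨φ, hφ, hae⟩ := exists_strictMono_ae_tendsto_of_cauchy_L2 hp hcau
  refine ⟨fun k => w (φ k), fun k => hC (hφ.id_le k) (hwC (φ k)), ?_⟩
  filter_upwards [hae] with x ⟨l, hl⟩
  rcases Real.tendsto_atBot_or_exists_tendsto_of_tendsto_exp hl with h | ⟨l', h⟩
  · exact .inl (((tendsto_const_mul_atTop_of_neg (by norm_num : (-2 : ℝ) < 0)).2 h).congr
      fun k => by ring)
  · exact .inr ⟨-2 * l', (h.const_mul (-2)).congr fun k => by ring⟩

theorem exists_ae_tendsto_of_mem_convexHull_tail {μ : Measure α} [SFinite μ] {u : ℕ → α → ℝ}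
    (hu₀ : ∀ n, 0 ≤ u n) (hu : ∀ n, AEMeasurable (u n) μ) :
    ∃ w : ℕ → α → ℝ, (∀ n, w n ∈ convexHull ℝ (u '' Set.Ici n)) ∧ ∀ᵐ x ∂μ,
      Tendsto (fun n => w n x) atTop atTop ∨ ∃ l, Tendsto (fun n => w n x) atTop (𝓝 l) := by
  obtain ⟨ν, _, hμν, hνμ⟩ := exists_isFiniteMeasure_absolutelyContinuous μ
  obtain ⟨w, hwC, hw⟩ :=
    exists_ae_tendsto_of_mem_convexHull_tail_of_isFiniteMeasure hu₀ fun n => (hu n).mono_ac hνμ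
  exact ⟨w, hwC, hμν.ae_le hw⟩

end

namespace MeasLattice

variable [MeasurableSpace α] {μ : Measure α}

theorem exists_nonneg_factorization_lt (X Y : MeasLattice μ) {f : α → ℝ} (hf : ¬f =ᵐ[μ] 0)
    {c : ℝ≥0∞} (hc : mProd μ X.N Y.N f < c) :
    ∃ u v : α → ℝ, 0 ≤ u ∧ 0 ≤ v ∧ u * v =ᵐ[μ] |f| ∧ X.N u ≤ 1 ∧ Y.N v < c := by
  obtain ⟨p, hp⟩ := iInf_lt_iff.1 hc
  obtain ⟨hfp, hpc⟩ := iInf_lt_iff.1 hp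
  have hX₀ : X.N p.1 ≠ 0 := fun h => hf <| by
    filter_upwards [hfp, X.n_eq_zero _ h] with x h₁ h₂
    simp [h₁, h₂]
  have hY₀ : Y.N p.2 ≠ 0 := fun h => hf <| by
    filter_upwards [hfp, Y.n_eq_zero _ h] with x h₁ h₂
    simp [h₁, h₂]
  have hXtop : X.N p.1 ≠ ⊤ := fun h => by
    rw [h, ENNReal.top_mul hY₀] at hpc
    exact not_top_lt hpc
  set t := (X.N p.1).toReal
  have ht : 0 < t := ENNReal.toReal_pos hX₀ hXtop
  refine ⟨t⁻¹ • |p.1|, t • |p.2|, smul_nonneg (inv_nonneg.2 ht.le) (abs_nonneg _),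
    smul_nonneg ht.le (abs_nonneg _), ?_, ?_, ?_⟩
  · filter_upwards [hfp] with x hx
    simp only [Pi.mul_apply, Pi.smul_apply, Pi.abs_apply, smul_eq_mul, hx, abs_mul]
    field_simp
  · rw [X.n_smul_of_nonneg (inv_nonneg.2 ht.le), X.n_abs, ENNReal.ofReal_inv_of_pos ht,
      ENNReal.ofReal_toReal hXtop, ENNReal.inv_mul_cancel hX₀ hXtop]
  · rwa [Y.n_smul_of_nonneg ht.le, Y.n_abs, ENNReal.ofReal_toReal hXtop]

theorem exists_factorization_of_ae_tendsto {X Y : MeasLattice μ} (hXF : X.Fatou) (hYF : Y.Fatou)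
    {f : α → ℝ} {w z : ℕ → α → ℝ} {c : ℕ → ℝ≥0∞} {c₀ : ℝ≥0∞} (hc : Tendsto c atTop (𝓝 c₀))
    (hc₀ : c₀ ≠ ⊤) (hw₀ : ∀ n, 0 ≤ w n) (hwX : ∀ n, X.N (w n) ≤ 1) (hzY : ∀ n, Y.N (z n) ≤ c n)
    (hfwz : ∀ n, ∀ᵐ x ∂μ, |f x| ≤ w n x * z n x)
    (hw : ∀ᵐ x ∂μ, Tendsto (fun n => w n x) atTop atTop ∨
      ∃ l, Tendsto (fun n => w n x) atTop (𝓝 l)) :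
    ∃ g h : α → ℝ, f =ᵐ[μ] g * h ∧ X.N g ≤ 1 ∧ Y.N h ≤ c₀ := by
  have hwX' : liminf (fun n => X.N (w n)) atTop ≤ 1 :=
    liminf_le_of_frequently_le' (.of_forall hwX)
  set g : α → ℝ := fun x => limUnder atTop fun n => w n x
  have hg : ∀ᵐ x ∂μ, Tendsto (fun n => w n x) atTop (𝓝 (g x)) := by
    filter_upwards [hw, hXF.ae_not_tendsto_atTop (ne_top_of_le_ne_top ENNReal.one_ne_top hwX')]
      with x hx hx'
    exact tendsto_nhds_limUnder (hx.resolve_left hx')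
  -- `|f x| / 0 = 0`, so `θ n ≤ |z n|` holds also where `w n` vanishes
  set θ : ℕ → α → ℝ := fun n x => |f x| / w n x
  have hθY : ∀ n, Y.N (θ n) ≤ c n := fun n => by
    refine (Y.ideal (z n) _ ((hfwz n).mono fun x hx => ?_)).trans (hzY n)
    rw [abs_of_nonneg (div_nonneg (abs_nonneg _) (hw₀ n x))]
    exact div_le_of_le_mul₀ (hw₀ n x) (abs_nonneg _)
      (hx.trans (by rw [mul_comm]; exact mul_le_mul_of_nonneg_right (le_abs_self _) (hw₀ n x)))
  have hθ : liminf (fun n => Y.N (θ n)) atTop ≤ c₀ :=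
    (liminf_le_liminf (.of_forall hθY)).trans_eq hc.liminf_eq
  -- where `g` vanishes but `f` does not, `θ n = |f| / w n` would blow up
  have hfg : ∀ᵐ x ∂μ, g x = 0 → f x = 0 := by
    filter_upwards [hg, hYF.ae_not_tendsto_atTop (ne_top_of_le_ne_top hc₀ hθ), ae_all_iff.2 hfwz]
      with x hx hθx hfwzx hgx
    by_contra hfx
    have hpos : ∀ n, 0 < w n x := fun n => (show 0 ≤ w n x from hw₀ n x).lt_of_ne fun h => by
      have := hfwzx n
      rw [← h, zero_mul] at this
      exact hfx (abs_nonpos_iff.1 this)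
    have hw0 : Tendsto (fun n => w n x) atTop (𝓝[>] 0) :=
      tendsto_nhdsWithin_iff.2 ⟨hgx ▸ hx, .of_forall hpos⟩
    exact hθx ((hw0.inv_tendsto_nhdsGT_zero.const_mul_atTop (abs_pos.2 hfx)).congr fun n =>
      (div_eq_mul_inv _ _).symm)
  refine ⟨g, f / g, ?_, (hXF.n_le_liminf hg).trans hwX', ?_⟩
  · filter_upwards [hfg] with x hx
    by_cases hgx : g x = 0
    · simp [hgx, hx hgx]
    · simp [mul_div_cancel₀ _ hgx]
  · rw [← Y.n_abs]
    refine (hYF.n_le_liminf (f := θ) ?_).trans hθ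
    filter_upwards [hg, hfg] with x hx hfx
    by_cases hgx : g x = 0
    · simp [θ, hfx hgx, hgx]
    · have hg₀ : 0 ≤ g x := ge_of_tendsto' hx fun n => hw₀ n x
      have : Tendsto (fun n => |f x| / w n x) atTop (𝓝 (|f x| / g x)) :=
        tendsto_const_nhds.div hx hgx
      simpa [θ, abs_div, abs_of_nonneg hg₀] using this

end MeasLattice

/-- If `X` and `Y` are Banach lattices of measurable functions on the same σ-finite
measure space, both having the Fatou property, then the infimum in the definition of the
product quasi-norm is attained: every `f ∈ XY` admits a factorization `f = g h` with
`g ∈ X`, `h ∈ Y` and `‖g‖_X ‖h‖_Y ≤ ‖f‖_{XY}`. -/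
theorem exact_factorization [MeasurableSpace α] (μ : Measure α) [SigmaFinite μ]
    (X Y : MeasLattice μ)
    (hX : X.IsBanach) (hY : Y.IsBanach) (hXF : X.Fatou) (hYF : Y.Fatou)
    (f : α → ℝ)
    (hf : ∃ g₀ h₀ : α → ℝ, f =ᵐ[μ] g₀ * h₀ ∧ X.N g₀ ≠ ⊤ ∧ Y.N h₀ ≠ ⊤) :
    ∃ g h : α → ℝ, f =ᵐ[μ] g * h ∧ X.N g * Y.N h ≤ mProd μ X.N Y.N f := by
  obtain ⟨g₀, h₀, hfgh₀, hg₀, hh₀⟩ := hf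
  set I := mProd μ X.N Y.N f
  have hI : I ≠ ⊤ :=
    ne_top_of_le_ne_top (ENNReal.mul_ne_top hg₀ hh₀) (iInf₂_le (g₀, h₀) hfgh₀)
  by_cases hf₀ : f =ᵐ[μ] 0
  · exact ⟨0, 0, by simpa using hf₀, by simp [X.n_zero]⟩
  choose u v hu₀ hv₀ huv huX hvY using fun n : ℕ =>
    X.exists_nonneg_factorization_lt Y hf₀ (ENNReal.lt_add_right hI (ENNReal.inv_ne_zero.2
      (ENNReal.natCast_ne_top n)))
  obtain ⟨w, hwC, hw⟩ := exists_ae_tendsto_of_mem_convexHull_tail hu₀ fun n =>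
    X.meas _ (ne_top_of_le_ne_top ENNReal.one_ne_top (huX n))
  have hwS : ∀ n : ℕ, w n ∈ {w | X.N w ≤ 1} ∩
      {w | 0 ≤ w ∧ ∃ z, 0 ≤ z ∧ Y.N z ≤ I + (n : ℝ≥0∞)⁻¹ ∧ ∀ᵐ x ∂μ, |f x| ≤ w x * z x} := by
    refine fun n => convexHull_min ?_ ((X.convex_setOf_n_le hX.1 1).inter
      (Y.convex_setOf_le_mul hY.1 _ _)) (hwC n)
    rintro _ ⟨i, hi, rfl⟩
    refine ⟨huX i, hu₀ i, v i, hv₀ i, (hvY i).le.trans ?_, (huv i).mono fun x hx => hx.ge⟩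
    gcongr
    exact hi
  choose hwX hw₀ z _ hzY hfwz using hwS
  obtain ⟨g, h, hfgh, hgX, hhY⟩ := MeasLattice.exists_factorization_of_ae_tendsto hXF hYF
    (by simpa using tendsto_const_nhds.add ENNReal.tendsto_inv_nat_nhds_zero) hI hw₀ hwX hzY
    hfwz hw
  exact ⟨g, h, hfgh, (mul_le_mul' hgX hhY).trans_eq (one_mul I)⟩
end
end

section
/- Suppose X and Y are quasi-normed lattices of measurable functions on the same σ-finite measure space and Y has order continuous quasi-norm. Then the pointwise product XY also has order continuous quasi-norm. -/
open scoped ENNReal NNReal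
open Filter MeasureTheory

noncomputable section

variable {α : Type*}

/-
Dominate everything by `F = sup_n |f_n| ∈ XY` and factor `F = g h` with `g ∈ X`, `h ∈ Y`.
Then `f_n = g k_n` with `k_n = f_n / g`, where `|k_n| ≤ |h|` and `k_n → 0` a.e. (where `g = 0`,
also `f_n = 0`, and `x / 0 = 0` gives `k_n = 0`). Order continuity of `Y` gives `‖k_n‖_Y → 0`,
hence `‖f_n‖_{XY} ≤ ‖g‖_X ‖k_n‖_Y → 0`.
-/

lemma MeasLattice.n_zero_s8 [MeasurableSpace α] {μ : Measure α} (X : MeasLattice μ) :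
    X.N 0 = 0 := by
  simpa using X.n_smul 0 0

lemma mProd_le_of_ae_eq_mul [MeasurableSpace α] {μ : Measure α} {N₀ N₁ : (α → ℝ) → ℝ≥0∞}
    {f g h : α → ℝ} (hf : f =ᵐ[μ] g * h) : mProd μ N₀ N₁ f ≤ N₀ g * N₁ h :=
  iInf₂_le (g, h) hf

lemma MeasLattice.exists_ae_eq_mul_of_mProd_lt_top [MeasurableSpace α] {μ : Measure α}
    (X Y : MeasLattice μ) {F : α → ℝ} (hF : mProd μ X.N Y.N F < ⊤) :
    ∃ g h : α → ℝ, F =ᵐ[μ] g * h ∧ X.N g ≠ ⊤ ∧ Y.N h ≠ ⊤ := by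
  obtain ⟨⟨g, h⟩, hgh, hlt⟩ : ∃ p : (α → ℝ) × (α → ℝ), F =ᵐ[μ] p.1 * p.2 ∧ X.N p.1 * Y.N p.2 < ⊤ := by
    simpa only [mProd, iInf_lt_iff, exists_prop] using hF
  rcases ENNReal.mul_lt_top_iff.mp hlt with ⟨hg, hh⟩ | hg | hh
  · exact ⟨g, h, hgh, hg.ne, hh.ne⟩
  -- a null factor forces `F = 0 = 0 * 0` a.e.
  all_goals refine ⟨0, 0, ?_, by simp [X.n_zero_s8], by simp [Y.n_zero_s8]⟩
  · filter_upwards [hgh, X.n_eq_zero g hg] with x hx hgx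
    simp_all
  · filter_upwards [hgh, Y.n_eq_zero h hh] with x hx hhx
    simp_all

lemma abs_le_iSup_abs_of_tendsto {u : ℕ → ℝ} {a : ℝ} (hu : Tendsto u atTop (nhds a)) (n : ℕ) :
    |u n| ≤ ⨆ m, |u m| :=
  le_ciSup hu.abs.bddAbove_range n

lemma abs_div_le_of_abs_le_abs_mul {a b c : ℝ} (h : |a| ≤ |b * c|) : |a / b| ≤ |c| := by
  rcases eq_or_ne b 0 with rfl | hb
  · simp
  · rw [abs_div, div_le_iff₀ (abs_pos.mpr hb), mul_comm, ← abs_mul]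
    exact h

lemma eq_zero_of_abs_le_abs_mul {a b c : ℝ} (h : |a| ≤ |b * c|) (hb : b = 0) : a = 0 := by
  simpa [hb] using h

lemma tendsto_mProd_of_abs_le_mul [MeasurableSpace α] {μ : Measure α} {N₀ : (α → ℝ) → ℝ≥0∞}
    (Y : MeasLattice μ) (hY : mOrderCont μ Y.N) {f : ℕ → α → ℝ} {g h : α → ℝ}
    (hg : N₀ g ≠ ⊤) (hh : Y.N h ≠ ⊤) (hfgh : ∀ᵐ x ∂μ, ∀ n, |f n x| ≤ |g x * h x|)
    (hf : ∀ᵐ x ∂μ, Tendsto (fun n => f n x) atTop (nhds 0)) :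
    Tendsto (fun n => mProd μ N₀ Y.N (f n)) atTop (nhds 0) := by
  set k : ℕ → α → ℝ := fun n x => f n x / g x
  have hk_le : ∀ᵐ x ∂μ, ∀ n, |k n x| ≤ |h x| :=
    hfgh.mono fun x hx n => abs_div_le_of_abs_le_abs_mul (hx n)
  have hk_sup : Y.N (fun x => ⨆ n, |k n x|) ≠ ⊤ := by
    refine ne_top_of_le_ne_top hh (Y.ideal _ _ ?_)
    filter_upwards [hk_le] with x hx
    rw [abs_of_nonneg (Real.iSup_nonneg fun n => abs_nonneg _)]
    exact ciSup_le hx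
  have hk_lim : ∀ᵐ x ∂μ, Tendsto (fun n => k n x) atTop (nhds 0) :=
    hf.mono fun x hx => by simpa using hx.div_const (g x)
  have hf_eq : ∀ n, f n =ᵐ[μ] g * k n := fun n =>
    hfgh.mono fun x hx => (mul_div_cancel_of_imp' (eq_zero_of_abs_le_abs_mul (hx n))).symm
  have hbound : Tendsto (fun n => N₀ g * Y.N (k n)) atTop (nhds 0) := by
    simpa using ENNReal.Tendsto.const_mul (hY k hk_sup hk_lim) (Or.inr hg)
  exact tendsto_of_tendsto_of_tendsto_of_le_of_le tendsto_const_nhds hbound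
    (fun n => zero_le) fun n => mProd_le_of_ae_eq_mul (hf_eq n)

theorem orderCont_prod_general [MeasurableSpace α] (μ : Measure α)
    (X Y : MeasLattice μ) (hY : mOrderCont μ Y.N) :
    mOrderCont μ (mProd μ X.N Y.N) := by
  intro f hF hf
  obtain ⟨g, h, hgh, hg, hh⟩ := X.exists_ae_eq_mul_of_mProd_lt_top Y hF.lt_top
  refine tendsto_mProd_of_abs_le_mul Y hY hg hh ?_ hf
  filter_upwards [hgh, hf] with x hx hfx n
  calc |f n x| ≤ ⨆ m, |f m x| := abs_le_iSup_abs_of_tendsto hfx n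
    _ = g x * h x := hx
    _ ≤ |g x * h x| := le_abs_self _

/-- If `X` and `Y` are quasi-normed lattices of measurable functions on the same
σ-finite measure space and `Y` has order continuous quasi-norm, then the pointwise
product `XY` also has order continuous quasi-norm. -/
theorem orderCont_prod [MeasurableSpace α] (μ : Measure α) [SigmaFinite μ]
    (X Y : MeasLattice μ) (hY : mOrderCont μ Y.N) :
    mOrderCont μ (mProd μ X.N Y.N) :=
  orderCont_prod_general μ X Y hY

end
end
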